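/- arXiv:1705.01302 — 3 statements merged into one kernel-verified Lean document; each statement's English description precedes it below -/
import Mathlib

section
/- If g : [0,∞) → ℝ is a bounded measurable function with lim_{t→∞} g(t) = G, then the mean optimal centralised generation m_Q(t) := q₀·e^{−(K_f/δ)t} + (λ/δ)·∫₀^t e^{−(K_f/δ)(t−s)} (∫_s^∞ e^{−(ρ+K_f/δ)(u−s)} g(u) du) ds − ((π + hρ)/(2λ))·(1 − e^{−(K_f/δ)t}) converges as t → ∞ to G − (π + hρ)/(2λ); in particular the corresponding mean installation rate m_Q'(t) tends to zero. -/
open MeasureTheory Filter Set Topology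

/-!
Write `k = K_f / δ`: it is the positive root of `k (ρ + k) = λ / δ`, and
`m_Q(t) = q₀ e^{-kt} + (λ/δ) ∫₀ᵗ e^{-k(t-s)} F(s) ds - C (1 - e^{-kt})` with
`F(s) = ∫ₛ^∞ e^{-(ρ+k)(u-s)} g(u) du` and `C = (π + hρ)/(2λ)`.
Averaging a bounded function with limit `L` against the kernel `e^{-av}` on `(0, ∞)` gives a
function with limit `L / a` (dominated convergence). Hence `F → G/(ρ+k)`, the convolution tends to
`G / (k (ρ+k))`, and `m_Q → G - C`. As `F` is continuous, `m_Q' = (λ/δ) F - k (m_Q + C)` for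
`t > 0`, and the right-hand side tends to `(λ/δ) G/(ρ+k) - k G = 0`.
-/

/-- The positive root of `x ^ 2 + ρ * x - c` (for `c > 0`). -/
noncomputable def quadraticRoot (ρ c : ℝ) : ℝ := (-ρ + √(ρ ^ 2 + 4 * c)) / 2

theorem quadraticRoot_pos (ρ : ℝ) {c : ℝ} (hc : 0 < c) : 0 < quadraticRoot ρ c := by
  have : √(ρ ^ 2) < √(ρ ^ 2 + 4 * c) := Real.sqrt_lt_sqrt (sq_nonneg ρ) (by linarith)
  rw [Real.sqrt_sq_eq_abs] at this
  unfold quadraticRoot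
  linarith [le_abs_self ρ]

theorem quadraticRoot_mul_add_self (ρ : ℝ) {c : ℝ} (hc : 0 ≤ c) :
    quadraticRoot ρ c * (ρ + quadraticRoot ρ c) = c := by
  have := Real.sq_sqrt (show 0 ≤ ρ ^ 2 + 4 * c by positivity)
  unfold quadraticRoot
  linear_combination this / 4

theorem integral_Ioi_exp_neg_mul_mul_const {a : ℝ} (ha : 0 < a) (L : ℝ) :
    ∫ v in Ioi 0, Real.exp (-a * v) * L = L / a := by
  rw [integral_mul_const, integral_exp_mul_Ioi (neg_lt_zero.2 ha)]
  field_simp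
  simp

theorem tendsto_integral_Ioi_exp_neg_mul_mul {α : Type*} {l : Filter α}
    [l.IsCountablyGenerated] {a M L : ℝ} (ha : 0 < a) {φ : α → ℝ → ℝ}
    (hφ_meas : ∀ t, AEStronglyMeasurable (φ t) (volume.restrict (Ioi 0)))
    (hφ_bdd : ∀ t v, |φ t v| ≤ M) (hφ_lim : ∀ v, 0 < v → Tendsto (fun t => φ t v) l (𝓝 L)) :
    Tendsto (fun t => ∫ v in Ioi 0, Real.exp (-a * v) * φ t v) l (𝓝 (L / a)) := by
  rw [← integral_Ioi_exp_neg_mul_mul_const ha]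
  refine tendsto_integral_filter_of_dominated_convergence (fun v => Real.exp (-a * v) * M)
    (Eventually.of_forall fun t => ?_) (Eventually.of_forall fun t => ?_)
    ((exp_neg_integrableOn_Ioi 0 ha).mul_const M)
    (ae_restrict_of_forall_mem measurableSet_Ioi fun v hv => (hφ_lim v hv).const_mul _)
  · exact (Real.continuous_exp.comp (continuous_const_mul (-a))).aestronglyMeasurable.mul
      (hφ_meas t)
  · refine Eventually.of_forall fun v => ?_
    rw [norm_mul, Real.norm_eq_abs, Real.norm_eq_abs, Real.abs_exp]
    exact mul_le_mul_of_nonneg_left (hφ_bdd t v) (Real.exp_pos _).le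

theorem integral_Ioi_comp_add_right (f : ℝ → ℝ) (a s : ℝ) :
    ∫ x in Ioi a, f (x + s) = ∫ x in Ioi (a + s), f x := by
  have := (measurePreserving_add_right volume s).setIntegral_preimage_emb
    (measurableEmbedding_addRight s) f (Ioi (a + s))
  rwa [preimage_add_const_Ioi, add_sub_cancel_right] at this

theorem integral_Ioi_comp_sub_left (f : ℝ → ℝ) (t : ℝ) :
    ∫ x in Ioi 0, f (t - x) = ∫ x in Iio t, f x := by
  have := (Measure.measurePreserving_sub_left volume t).setIntegral_preimage_emb
    (MeasurableEquiv.subLeft t).measurableEmbedding f (Iio t)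
  rwa [preimage_const_sub_Iio, sub_self] at this

theorem continuous_integral_Ioi {f : ℝ → ℝ} (hf : ∀ a, IntegrableOn f (Ioi a)) :
    Continuous fun a => ∫ x in Ioi a, f x := by
  have key (a : ℝ) : ∫ x in Ioi a, f x = (∫ x in Ioi 0, f x) - ∫ x in (0 : ℝ)..a, f x := by
    rw [← intervalIntegral.integral_Ioi_sub_Ioi' (hf 0) (hf a), sub_sub_cancel]
  refine (continuous_const.sub (intervalIntegral.continuous_primitive (fun a b => ?_) 0)).congr
    fun a => (key a).symm
  exact intervalIntegrable_iff.2 ((hf (min a b)).mono_set Ioc_subset_Ioi_self)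

theorem hasDerivAt_exp_const_mul (c t : ℝ) :
    HasDerivAt (fun t => Real.exp (c * t)) (Real.exp (c * t) * c) t := by
  simpa using ((hasDerivAt_id t).const_mul c).exp

noncomputable def expTail (a : ℝ) (g : ℝ → ℝ) (s : ℝ) : ℝ :=
  ∫ u in Ioi s, Real.exp (-a * (u - s)) * g u

noncomputable def expConv (k : ℝ) (F : ℝ → ℝ) (t : ℝ) : ℝ :=
  ∫ s in Ioc 0 t, Real.exp (-k * (t - s)) * F s

theorem expTail_eq_integral_Ioi_zero (a : ℝ) (g : ℝ → ℝ) (s : ℝ) :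
    expTail a g s = ∫ v in Ioi 0, Real.exp (-a * v) * g (v + s) := by
  have := integral_Ioi_comp_add_right (fun u => Real.exp (-a * (u - s)) * g u) 0 s
  simp only [zero_add, add_sub_cancel_right] at this
  exact this.symm

theorem expConv_eq_integral_Ioi (k : ℝ) (F : ℝ → ℝ) (t : ℝ) :
    expConv k F t = ∫ v in Ioi 0, Real.exp (-k * v) * (Ioi 0).indicator F (t - v) := by
  have := integral_Ioi_comp_sub_left
    (fun s => Real.exp (-k * (t - s)) * (Ioi 0).indicator F s) t
  simp only [sub_sub_cancel] at this
  rw [this, expConv, integral_Ioc_eq_integral_Ioo, ← Iio_inter_Ioi, ← setIntegral_indicator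
    measurableSet_Ioi]
  simp only [indicator_mul_right]

theorem expConv_eq_exp_mul_intervalIntegral (k : ℝ) (F : ℝ → ℝ) {t : ℝ} (ht : 0 ≤ t) :
    expConv k F t = Real.exp (-k * t) * ∫ s in (0 : ℝ)..t, Real.exp (k * s) * F s := by
  rw [expConv, intervalIntegral.integral_of_le ht, ← integral_const_mul]
  refine setIntegral_congr_fun measurableSet_Ioc fun s _ => ?_
  rw [← mul_assoc, ← Real.exp_add]
  ring_nf

theorem hasDerivAt_expConv (k : ℝ) {F : ℝ → ℝ} (hF : Continuous F) {t : ℝ} (ht : 0 < t) :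
    HasDerivAt (expConv k F) (F t - k * expConv k F t) t := by
  have hprim : HasDerivAt (fun t => ∫ s in (0 : ℝ)..t, Real.exp (k * s) * F s)
      (Real.exp (k * t) * F t) t :=
    (((Real.continuous_exp.comp (continuous_const_mul k)).mul hF).integral_hasStrictDerivAt
      0 t).hasDerivAt
  refine ((hasDerivAt_exp_const_mul (-k) t).mul hprim).congr_of_eventuallyEq
    ((eventually_ge_nhds ht).mono fun u hu => expConv_eq_exp_mul_intervalIntegral k F hu)
    |>.congr_deriv ?_
  have hcancel : Real.exp (k * t) * Real.exp (-k * t) = 1 := by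
    rw [← Real.exp_add, neg_mul, add_neg_cancel, Real.exp_zero]
  rw [expConv_eq_exp_mul_intervalIntegral k F ht.le]
  linear_combination F t * hcancel

section expTail

variable {a M : ℝ} {g : ℝ → ℝ}

theorem abs_expTail_le (ha : 0 < a) (hM : ∀ t, |g t| ≤ M) (s : ℝ) : |expTail a g s| ≤ M / a := by
  rw [expTail_eq_integral_Ioi_zero, ← integral_Ioi_exp_neg_mul_mul_const ha, ← Real.norm_eq_abs]
  refine norm_integral_le_of_norm_le ((exp_neg_integrableOn_Ioi 0 ha).mul_const M)
    (Eventually.of_forall fun v => ?_)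
  rw [norm_mul, Real.norm_eq_abs, Real.norm_eq_abs, Real.abs_exp]
  exact mul_le_mul_of_nonneg_left (hM _) (Real.exp_pos _).le

theorem continuous_expTail (ha : 0 < a) (hg : Measurable g) (hM : ∀ t, |g t| ≤ M) :
    Continuous (expTail a g) := by
  have hint (s : ℝ) : IntegrableOn (fun u => Real.exp (-a * u) * g u) (Ioi s) :=
    (exp_neg_integrableOn_Ioi s ha).mul_bdd hg.aestronglyMeasurable
      (Eventually.of_forall fun u => (Real.norm_eq_abs _).trans_le (hM u))
  have key (s : ℝ) :
      expTail a g s = Real.exp (a * s) * ∫ u in Ioi s, Real.exp (-a * u) * g u := by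
    rw [expTail, ← integral_const_mul]
    refine setIntegral_congr_fun measurableSet_Ioi fun u _ => ?_
    rw [← mul_assoc, ← Real.exp_add]
    ring_nf
  refine ((Real.continuous_exp.comp (continuous_const_mul a)).mul
    (continuous_integral_Ioi hint)).congr fun s => (key s).symm

theorem tendsto_expTail (ha : 0 < a) (hg : Measurable g) (hM : ∀ t, |g t| ≤ M) {G : ℝ}
    (hG : Tendsto g atTop (𝓝 G)) : Tendsto (expTail a g) atTop (𝓝 (G / a)) := by
  simp_rw [funext (expTail_eq_integral_Ioi_zero a g)]
  refine tendsto_integral_Ioi_exp_neg_mul_mul ha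
    (fun s => (hg.comp (measurable_add_const s)).aestronglyMeasurable) (fun s v => hM _)
    fun v _ => hG.comp (tendsto_atTop_add_const_left atTop v tendsto_id)

end expTail

theorem tendsto_expConv {k M L : ℝ} {F : ℝ → ℝ} (hk : 0 < k) (hF : Measurable F)
    (hM : ∀ t, |F t| ≤ M) (hL : Tendsto F atTop (𝓝 L)) :
    Tendsto (expConv k F) atTop (𝓝 (L / k)) := by
  have hext : Tendsto ((Ioi 0).indicator F) atTop (𝓝 L) :=
    hL.congr' <| (eventually_gt_atTop 0).mono fun t ht => (indicator_of_mem ht F).symm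
  simp_rw [funext (expConv_eq_integral_Ioi k F)]
  refine tendsto_integral_Ioi_exp_neg_mul_mul (M := M) hk (fun t => ?_) (fun t v => ?_)
    fun v _ => ?_
  · exact ((hF.indicator measurableSet_Ioi).comp
      (measurable_const.sub measurable_id)).aestronglyMeasurable
  · exact (norm_indicator_le_norm_self F _).trans (hM _)
  · exact hext.comp (tendsto_atTop_add_const_right atTop (-v) tendsto_id)

noncomputable def meanPath (q₀ k c C : ℝ) (F : ℝ → ℝ) (t : ℝ) : ℝ :=
  q₀ * Real.exp (-k * t) + c * expConv k F t - C * (1 - Real.exp (-k * t))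

section meanPath

variable {q₀ k c C M L : ℝ} {F : ℝ → ℝ}

theorem tendsto_meanPath (hk : 0 < k) (hF : Measurable F) (hM : ∀ t, |F t| ≤ M)
    (hL : Tendsto F atTop (𝓝 L)) :
    Tendsto (meanPath q₀ k c C F) atTop (𝓝 (c * (L / k) - C)) := by
  have hexp : Tendsto (fun t => Real.exp (-k * t)) atTop (𝓝 0) :=
    Real.tendsto_exp_atBot.comp (tendsto_id.const_mul_atTop_of_neg (neg_lt_zero.2 hk))
  have := ((hexp.const_mul q₀).add ((tendsto_expConv hk hF hM hL).const_mul c)).sub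
    (((tendsto_const_nhds (x := (1 : ℝ))).sub hexp).const_mul C)
  rwa [mul_zero, zero_add, sub_zero, mul_one] at this

theorem hasDerivAt_meanPath (hF : Continuous F) {t : ℝ} (ht : 0 < t) :
    HasDerivAt (meanPath q₀ k c C F) (c * F t - k * (meanPath q₀ k c C F t + C)) t := by
  refine (((hasDerivAt_exp_const_mul (-k) t).const_mul q₀).add
    ((hasDerivAt_expConv k hF ht).const_mul c)).sub
    (((hasDerivAt_const t 1).sub (hasDerivAt_exp_const_mul (-k) t)).const_mul C)
    |>.congr_deriv ?_
  rw [meanPath]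
  ring

theorem tendsto_deriv_meanPath (hk : 0 < k) (hF : Continuous F) (hM : ∀ t, |F t| ≤ M)
    (hL : Tendsto F atTop (𝓝 L)) : Tendsto (deriv (meanPath q₀ k c C F)) atTop (𝓝 0) := by
  have hm := tendsto_meanPath (q₀ := q₀) (c := c) (C := C) hk hF.measurable hM hL
  have hlim := (hL.const_mul c).sub ((hm.add_const C).const_mul k)
  rw [sub_add_cancel, mul_left_comm, mul_div_cancel₀ _ hk.ne', sub_self] at hlim
  exact hlim.congr' <| (eventually_gt_atTop 0).mono fun t ht =>
    (hasDerivAt_meanPath hF ht).deriv.symm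

end meanPath

theorem stmt_8_general (ρ δ lam : ℝ) (hδ : 0 < δ) (hlam : 0 < lam)
    (π h q₀ : ℝ)
    (Kf : ℝ) (hKf : Kf = (δ / 2) * (-ρ + Real.sqrt (ρ ^ 2 + 4 * lam / δ)))
    (g : ℝ → ℝ) (hg_meas : Measurable g) (hg_bdd : ∃ M : ℝ, ∀ t, |g t| ≤ M)
    (G : ℝ) (hg_lim : Tendsto g atTop (nhds G))
    (mQ : ℝ → ℝ)
    (hmQ : ∀ t : ℝ, mQ t =
      q₀ * Real.exp (-(Kf / δ) * t) +
      (lam / δ) *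
        (∫ s in Set.Ioc (0 : ℝ) t, Real.exp (-(Kf / δ) * (t - s)) *
          ∫ u in Set.Ioi s, Real.exp (-(ρ + Kf / δ) * (u - s)) * g u) -
      ((π + h * ρ) / (2 * lam)) * (1 - Real.exp (-(Kf / δ) * t))) :
    Tendsto mQ atTop (nhds (G - (π + h * ρ) / (2 * lam))) ∧
      Tendsto (fun t : ℝ => deriv mQ t) atTop (nhds 0) := by
  obtain ⟨M, hM⟩ := hg_bdd
  set k := Kf / δ with hk_def
  have hc : 0 < lam / δ := div_pos hlam hδ
  have hk_eq : k = quadraticRoot ρ (lam / δ) := by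
    rw [hk_def, hKf, quadraticRoot]
    field_simp
  have hk : 0 < k := hk_eq ▸ quadraticRoot_pos ρ hc
  have hkρ : k * (ρ + k) = lam / δ := hk_eq ▸ quadraticRoot_mul_add_self ρ hc.le
  have hρk : 0 < ρ + k := pos_of_mul_pos_right (hkρ ▸ hc) hk.le
  obtain rfl : mQ = meanPath q₀ k (lam / δ) ((π + h * ρ) / (2 * lam)) (expTail (ρ + k) g) :=
    funext hmQ
  have hF_cont := continuous_expTail hρk hg_meas hM
  have hF_bdd := abs_expTail_le hρk hM
  have hF_lim := tendsto_expTail hρk hg_meas hM hg_lim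
  refine ⟨?_, tendsto_deriv_meanPath hk hF_cont hF_bdd hF_lim⟩
  convert tendsto_meanPath hk hF_cont.measurable hF_bdd hF_lim using 2
  rw [← hkρ]
  field_simp [hk.ne', hρk.ne']

/-- deterministic content of Proposition 3.2: if the expected
residual demand `g(t)` is bounded, measurable, and converges to `G`, then the
mean optimal centralised generation `m_Q(t)` converges to `G − (π + hρ)/(2λ)`,
and the mean installation rate `m_Q'(t)` tends to zero. -/
theorem stmt_8 (ρ δ lam : ℝ) (hρ : 0 < ρ) (hδ : 0 < δ) (hlam : 0 < lam)
    (π h q₀ : ℝ)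
    (Kf : ℝ) (hKf : Kf = (δ / 2) * (-ρ + Real.sqrt (ρ ^ 2 + 4 * lam / δ)))
    (g : ℝ → ℝ) (hg_meas : Measurable g) (hg_bdd : ∃ M : ℝ, ∀ t, |g t| ≤ M)
    (G : ℝ) (hg_lim : Tendsto g atTop (nhds G))
    (mQ : ℝ → ℝ)
    (hmQ : ∀ t : ℝ, mQ t =
      q₀ * Real.exp (-(Kf / δ) * t) +
      (lam / δ) *
        (∫ s in Set.Ioc (0 : ℝ) t, Real.exp (-(Kf / δ) * (t - s)) *
          ∫ u in Set.Ioi s, Real.exp (-(ρ + Kf / δ) * (u - s)) * g u) -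
      ((π + h * ρ) / (2 * lam)) * (1 - Real.exp (-(Kf / δ) * t))) :
    Tendsto mQ atTop (nhds (G - (π + h * ρ) / (2 * lam))) ∧
      Tendsto (fun t : ℝ => deriv mQ t) atTop (nhds 0) :=
  stmt_8_general ρ δ lam hδ hlam π h q₀ Kf hKf g hg_meas hg_bdd G hg_lim mQ hmQ
end

section
/- There exists a unique pair (K, Λ) of symmetric positive-definite 2×2 real matrices, K = [[K11, K12],[K12, K22]] and Λ = [[Λ11, Λ12],[Λ12, Λ22]], such that (K11, K12, K22) solves the social planner's Riccati system and (Λ11, Λ12, Λ22) solves the system: (b²/γ)·Λ11² + (1/δ)·Λ12² + ρ·Λ11 − σ²K11 − λ = 0, (b²/γ)·Λ11·Λ12 + (1/δ)·Λ12·Λ22 + ρ·Λ12 − λ = 0, and (b²/γ)·Λ12² + (1/δ)·Λ22² + ρ·Λ22 − λ = 0. -/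
/-!
Both systems have the shape
`A p² + B x² + c p = μ`, `A p x + B x q + ρ x = λ`, `A x² + B q² + ρ q = λ`
with `0 ≤ c ≤ ρ` and `0 < λ < μ`, and such a system has exactly one positive-definite
solution `[[p, x], [x, q]]`. For existence, solve the first and third equations for the
positive roots `p(x)`, `q(x)` and find `x` with the intermediate value theorem on
`[0, y]`, where `(A + B) y² + ρ y = λ`, so that `q(y) = y < p(y)`. For uniqueness, every
positive-definite solution has `0 < x < min p q`; comparing the equations of two solutions
with `x₁ < x₂` forces `p₁ > p₂`, `q₁ > q₂`, and the middle equation then gives a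
contradiction. The `K`-system is the case `c = ρ - σ²`, `μ = λ + η`, and once `K` is known the
`Λ`-system is the case `c = ρ`, `μ = λ + σ² K₁₁`.
-/

open Set

lemma ExistsUnique.prod_of_forall {α β : Type*} {p : α → Prop} {q : α → β → Prop}
    (h : ∃! a, p a) (h' : ∀ a, p a → ∃! b, q a b) :
    ∃! x : α × β, p x.1 ∧ q x.1 x.2 := by
  obtain ⟨a, ha, ha_unique⟩ := h
  obtain ⟨b, hb, hb_unique⟩ := h' a ha
  refine ⟨(a, b), ⟨ha, hb⟩, ?_⟩
  rintro ⟨a', b'⟩ ⟨ha', hb'⟩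
  obtain rfl := ha_unique a' ha'
  obtain rfl := hb_unique b' hb'
  rfl

section PosRoot

variable {a c k t : ℝ}

noncomputable def posRoot (a c k : ℝ) : ℝ := (-c + √(c ^ 2 + 4 * a * k)) / (2 * a)

lemma posRoot_spec (ha : 0 < a) (hk : 0 ≤ k) :
    a * posRoot a c k ^ 2 + c * posRoot a c k = k := by
  have hs : √(c ^ 2 + 4 * a * k) ^ 2 = c ^ 2 + 4 * a * k := Real.sq_sqrt (by positivity)
  unfold posRoot
  generalize √(c ^ 2 + 4 * a * k) = s at hs ⊢
  field_simp
  linear_combination hs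

lemma posRoot_nonneg (ha : 0 < a) (hk : 0 ≤ k) : 0 ≤ posRoot a c k := by
  have : c ≤ √(c ^ 2 + 4 * a * k) :=
    Real.le_sqrt_of_sq_le (by nlinarith [mul_nonneg ha.le hk])
  unfold posRoot
  apply div_nonneg <;> linarith

@[fun_prop]
lemma continuous_posRoot : Continuous (posRoot a c) := by
  unfold posRoot
  fun_prop

lemma strictMonoOn_quadratic (ha : 0 < a) (hc : 0 ≤ c) :
    StrictMonoOn (fun t => a * t ^ 2 + c * t) (Ici 0) := by
  intro s hs t _ hst
  simp only [mem_Ici] at hs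
  nlinarith [mul_nonneg hc (sub_nonneg.2 hst.le), mul_pos ha (sub_pos.2 hst)]

lemma lt_posRoot_iff (ha : 0 < a) (hc : 0 ≤ c) (hk : 0 ≤ k) (ht : 0 ≤ t) :
    t < posRoot a c k ↔ a * t ^ 2 + c * t < k := by
  rw [← (strictMonoOn_quadratic ha hc).lt_iff_lt ht (posRoot_nonneg ha hk)]
  simp only [posRoot_spec ha hk]

lemma le_posRoot_iff (ha : 0 < a) (hc : 0 ≤ c) (hk : 0 ≤ k) (ht : 0 ≤ t) :
    t ≤ posRoot a c k ↔ a * t ^ 2 + c * t ≤ k := by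
  rw [← (strictMonoOn_quadratic ha hc).le_iff_le ht (posRoot_nonneg ha hk)]
  simp only [posRoot_spec ha hk]

lemma eq_posRoot (ha : 0 < a) (hc : 0 ≤ c) (ht : 0 ≤ t) (h : a * t ^ 2 + c * t = k) :
    t = posRoot a c k := by
  have hk : 0 ≤ k := h ▸ by positivity
  refine (strictMonoOn_quadratic ha hc).injOn ht (posRoot_nonneg ha hk) ?_
  simp only [h, posRoot_spec ha hk]

end PosRoot

section RiccatiSystem

variable {A B c ρ lam μ : ℝ}

def IsRiccatiSolution (A B c ρ lam μ p x q : ℝ) : Prop :=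
  A * p ^ 2 + B * x ^ 2 + c * p = μ ∧
  A * p * x + B * x * q + ρ * x = lam ∧
  A * x ^ 2 + B * q ^ 2 + ρ * q = lam

lemma IsRiccatiSolution.pos_and_lt {p x q : ℝ} (hA : 0 < A) (hB : 0 < B) (hρ : 0 ≤ ρ)
    (hlam : 0 < lam) (hp : 0 < p) (hpq : 0 < p * q - x ^ 2)
    (h : IsRiccatiSolution A B c ρ lam μ p x q) : 0 < x ∧ x < p ∧ x < q := by
  obtain ⟨-, h₂, h₃⟩ := h
  have hq : 0 < q := pos_of_mul_pos_right (by nlinarith) hp.le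
  have hx : 0 < x := by
    refine pos_of_mul_pos_left (b := A * p + B * q + ρ) ?_ (by positivity)
    rw [show x * (A * p + B * q + ρ) = lam by linear_combination h₂]
    exact hlam
  have key : (A * x) * (p - x) = (B * q + ρ) * (q - x) := by linear_combination h₂ - h₃
  have hpx_iff : x < p ↔ x < q := by
    rw [← sub_pos, ← sub_pos (a := q), ← mul_pos_iff_of_pos_left (by positivity : 0 < A * x),
      key, mul_pos_iff_of_pos_left (by positivity)]
  have hpx : x < p := by
    by_contra! hpx
    have hqx : q ≤ x := le_of_not_gt fun hqx ↦ (hpx_iff.2 hqx).not_ge hpx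
    nlinarith [mul_le_mul hpx hqx hq.le hx.le]
  exact ⟨hx, hpx, hpx_iff.1 hpx⟩

lemma mul_sub_lt_of_quadratic_eq {a b c k u₁ u₂ v₁ v₂ : ℝ} (ha : 0 < a) (hb : 0 < b)
    (hc : 0 ≤ c) (hv₁ : 0 < v₁) (hv : v₁ < v₂) (hu₁ : v₁ < u₁) (hu₂ : v₂ < u₂)
    (h₁ : a * u₁ ^ 2 + c * u₁ + b * v₁ ^ 2 = k) (h₂ : a * u₂ ^ 2 + c * u₂ + b * v₂ ^ 2 = k) :
    a * (u₁ - u₂) < b * (v₂ - v₁) := by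
  have key : (u₁ - u₂) * (a * (u₁ + u₂) + c) = b * (v₂ - v₁) * (v₁ + v₂) := by
    linear_combination h₁ - h₂
  have hu : 0 < u₁ - u₂ := by
    refine pos_of_mul_pos_left ?_ (by nlinarith : 0 ≤ a * (u₁ + u₂) + c)
    rw [key]
    exact mul_pos (mul_pos hb (sub_pos.2 hv)) (by linarith)
  refine lt_of_mul_lt_mul_right (a := v₁ + v₂) ?_ (by linarith)
  nlinarith [mul_pos (mul_pos ha hu) (by linarith : 0 < u₁ + u₂ - v₁ - v₂), mul_nonneg hc hu.le]

lemma IsRiccatiSolution.le_offDiag {p₁ x₁ q₁ p₂ x₂ q₂ : ℝ} (hA : 0 < A) (hB : 0 < B) (hc : 0 ≤ c)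
    (hρ : 0 ≤ ρ) (hx₁ : 0 < x₁) (hxp₁ : x₁ < p₁) (hxq₁ : x₁ < q₁) (hxp₂ : x₂ < p₂)
    (hxq₂ : x₂ < q₂)
    (h₁ : IsRiccatiSolution A B c ρ lam μ p₁ x₁ q₁)
    (h₂ : IsRiccatiSolution A B c ρ lam μ p₂ x₂ q₂) : x₂ ≤ x₁ := by
  by_contra! hx
  obtain ⟨e₁, f₁, g₁⟩ := h₁
  obtain ⟨e₂, f₂, g₂⟩ := h₂
  have hp : A * (p₁ - p₂) < B * (x₂ - x₁) :=
    mul_sub_lt_of_quadratic_eq (k := μ) hA hB hc hx₁ hx hxp₁ hxp₂ (by linear_combination e₁)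
      (by linear_combination e₂)
  have hq : B * (q₁ - q₂) < A * (x₂ - x₁) :=
    mul_sub_lt_of_quadratic_eq (k := lam) hB hA hρ hx₁ hx hxq₁ hxq₂ (by linear_combination g₁)
      (by linear_combination g₂)
  have hf : x₁ * (A * (p₁ - p₂) + B * (q₁ - q₂)) = (x₂ - x₁) * (A * p₂ + B * q₂ + ρ) := by
    linear_combination f₁ - f₂
  have hpq₂ : (A + B) * x₁ < A * p₂ + B * q₂ := by nlinarith
  nlinarith [mul_lt_mul_of_pos_left (add_lt_add hp hq) hx₁,
    mul_lt_mul_of_pos_left hpq₂ (sub_pos.2 hx), mul_nonneg (sub_pos.2 hx).le hρ]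

lemma IsRiccatiSolution.eq {p₁ x₁ q₁ p₂ x₂ q₂ : ℝ} (hA : 0 < A) (hB : 0 < B) (hc : 0 ≤ c)
    (hρ : 0 ≤ ρ) (hlam : 0 < lam)
    (hp₁ : 0 < p₁) (hpq₁ : 0 < p₁ * q₁ - x₁ ^ 2) (h₁ : IsRiccatiSolution A B c ρ lam μ p₁ x₁ q₁)
    (hp₂ : 0 < p₂) (hpq₂ : 0 < p₂ * q₂ - x₂ ^ 2) (h₂ : IsRiccatiSolution A B c ρ lam μ p₂ x₂ q₂) :
    p₁ = p₂ ∧ x₁ = x₂ ∧ q₁ = q₂ := by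
  obtain ⟨hx₁, hxp₁, hxq₁⟩ := h₁.pos_and_lt hA hB hρ hlam hp₁ hpq₁
  obtain ⟨hx₂, hxp₂, hxq₂⟩ := h₂.pos_and_lt hA hB hρ hlam hp₂ hpq₂
  obtain rfl : x₁ = x₂ := le_antisymm
    (h₂.le_offDiag hA hB hc hρ hx₂ hxp₂ hxq₂ hxp₁ hxq₁ h₁)
    (h₁.le_offDiag hA hB hc hρ hx₁ hxp₁ hxq₁ hxp₂ hxq₂ h₂)
  obtain ⟨e₁, -, g₁⟩ := h₁
  obtain ⟨e₂, -, g₂⟩ := h₂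
  refine ⟨(strictMonoOn_quadratic hA hc).injOn hp₁.le hp₂.le ?_, rfl,
    (strictMonoOn_quadratic hB hρ).injOn (hx₁.trans hxq₁).le (hx₂.trans hxq₂).le ?_⟩
  · linear_combination e₁ - e₂
  · linear_combination g₁ - g₂

lemma exists_isRiccatiSolution (hA : 0 < A) (hB : 0 < B) (hc : 0 ≤ c) (hcρ : c ≤ ρ)
    (hlam : 0 < lam) (hμ : lam < μ) :
    ∃ p x q, 0 < p ∧ 0 < p * q - x ^ 2 ∧ IsRiccatiSolution A B c ρ lam μ p x q := by
  have hρ : 0 ≤ ρ := hc.trans hcρ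
  set y := posRoot (A + B) ρ lam
  have hy : 0 < y := (lt_posRoot_iff (by positivity) hρ hlam.le le_rfl).2 (by simpa using hlam)
  have hy_spec : (A + B) * y ^ 2 + ρ * y = lam := posRoot_spec (by positivity) hlam.le
  set P : ℝ → ℝ := fun t => posRoot A c (μ - B * t ^ 2)
  set Q : ℝ → ℝ := fun t => posRoot B ρ (lam - A * t ^ 2)
  have below_y {t : ℝ} (ht : 0 ≤ t) (hty : t ≤ y) :
      0 ≤ μ - B * t ^ 2 ∧ 0 ≤ lam - A * t ^ 2 ∧ t < P t ∧ (t < y → t < Q t) := by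
    have hle := (le_posRoot_iff (by positivity) hρ hlam.le ht).1 hty
    have hct : c * t ≤ ρ * t := mul_le_mul_of_nonneg_right hcρ ht
    refine ⟨by nlinarith, by nlinarith,
      (lt_posRoot_iff hA hc (by nlinarith) ht).2 (by nlinarith), fun hty ↦ ?_⟩
    have hlt := (lt_posRoot_iff (by positivity) hρ hlam.le ht).1 hty
    exact (lt_posRoot_iff hB hρ (by nlinarith) ht).2 (by nlinarith)
  have hQy : Q y = y :=
    (eq_posRoot hB hρ hy.le (by linear_combination hy_spec)).symm
  set f : ℝ → ℝ := fun t => t * (A * P t + B * Q t + ρ) - lam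
  have hf_cont : Continuous f := by
    simp only [f, P, Q]
    fun_prop
  have hfy : 0 < f y := by
    have hPy := (below_y hy.le le_rfl).2.2.1
    simp only [f, hQy]
    nlinarith [mul_pos (mul_pos hA hy) (sub_pos.2 hPy)]
  obtain ⟨x, ⟨hx, hxy⟩, hfx⟩ :=
    intermediate_value_Ioo hy.le hf_cont.continuousOn ⟨by simpa [f] using hlam, hfy⟩
  obtain ⟨hP, hQ, hxP, hxQ⟩ := below_y hx.le hxy.le
  have hpq : x * x < P x * Q x := mul_lt_mul'' hxP (hxQ hxy) hx.le hx.le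
  refine ⟨P x, x, Q x, hx.trans hxP, by nlinarith, ?_, ?_, ?_⟩
  · linear_combination posRoot_spec (c := c) hA hP
  · linear_combination hfx
  · linear_combination posRoot_spec hB hQ

theorem existsUnique_posDef_isRiccatiSolution (hA : 0 < A) (hB : 0 < B) (hc : 0 ≤ c)
    (hcρ : c ≤ ρ) (hlam : 0 < lam) (hμ : lam < μ) :
    ∃! T : ℝ × ℝ × ℝ, (0 < T.1 ∧ 0 < T.1 * T.2.2 - T.2.1 ^ 2) ∧
      IsRiccatiSolution A B c ρ lam μ T.1 T.2.1 T.2.2 := by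
  obtain ⟨p, x, q, hp, hpq, h⟩ := exists_isRiccatiSolution hA hB hc hcρ hlam hμ
  refine ⟨(p, x, q), ⟨⟨hp, hpq⟩, h⟩, ?_⟩
  rintro ⟨p', x', q'⟩ ⟨⟨hp', hpq'⟩, h'⟩
  obtain ⟨rfl, rfl, rfl⟩ := h'.eq hA hB hc (hc.trans hcρ) hlam hp' hpq' hp hpq h
  rfl

end RiccatiSystem

/-- there exists a unique pair `(K, Λ)` of symmetric
positive-definite 2×2 matrices (encoded by their entries
`(K11, K12, K22)` and `(Λ11, Λ12, Λ22)`, positive-definiteness meaning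
`K11 > 0` and `K11·K22 − K12² > 0`) solving the social planner's Riccati
system and the associated system for `Λ`. -/
theorem stmt_9 (ρ σ b γ δ lam η : ℝ) (hρ : 0 < ρ) (hσ : 0 < σ) (hb : 0 < b)
    (hγ : 0 < γ) (hδ : 0 < δ) (hlam : 0 < lam) (hη : 0 < η) (hρσ : σ ^ 2 < ρ) :
    ∃! P : (ℝ × ℝ × ℝ) × (ℝ × ℝ × ℝ),
      (fun (K11 K12 K22 L11 L12 L22 : ℝ) =>
        -- K is symmetric positive-definite
        (0 < K11 ∧ 0 < K11 * K22 - K12 ^ 2) ∧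
        -- Λ is symmetric positive-definite
        (0 < L11 ∧ 0 < L11 * L22 - L12 ^ 2) ∧
        -- K solves the social planner's Riccati system
        (b ^ 2 / γ) * K11 ^ 2 + (1 / δ) * K12 ^ 2 + (ρ - σ ^ 2) * K11 - lam - η = 0 ∧
        (b ^ 2 / γ) * K11 * K12 + (1 / δ) * K12 * K22 + ρ * K12 - lam = 0 ∧
        (b ^ 2 / γ) * K12 ^ 2 + (1 / δ) * K22 ^ 2 + ρ * K22 - lam = 0 ∧
        -- Λ solves its Riccati system
        (b ^ 2 / γ) * L11 ^ 2 + (1 / δ) * L12 ^ 2 + ρ * L11 - σ ^ 2 * K11 - lam = 0 ∧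
        (b ^ 2 / γ) * L11 * L12 + (1 / δ) * L12 * L22 + ρ * L12 - lam = 0 ∧
        (b ^ 2 / γ) * L12 ^ 2 + (1 / δ) * L22 ^ 2 + ρ * L22 - lam = 0)
      P.1.1 P.1.2.1 P.1.2.2 P.2.1 P.2.2.1 P.2.2.2 := by
  have hA : 0 < b ^ 2 / γ := by positivity
  have hB : 0 < 1 / δ := by positivity
  have hK_unique := existsUnique_posDef_isRiccatiSolution hA hB (sub_nonneg.2 hρσ.le)
    (sub_le_self ρ (sq_nonneg σ)) hlam (lt_add_of_pos_right lam hη)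
  have hKΛ_unique := hK_unique.prod_of_forall fun K hK ↦
    existsUnique_posDef_isRiccatiSolution hA hB hρ.le le_rfl hlam
      (lt_add_of_pos_right lam (mul_pos (pow_pos hσ 2) hK.1.1))
  refine (existsUnique_congr fun P ↦ ?_).1 hKΛ_unique
  obtain ⟨⟨k₁₁, k₁₂, k₂₂⟩, ⟨l₁₁, l₁₂, l₂₂⟩⟩ := P
  simp only [IsRiccatiSolution]
  constructor
  · rintro ⟨⟨hK, e₁, e₂, e₃⟩, hΛ, f₁, f₂, f₃⟩
    exact ⟨hK, hΛ, by linear_combination e₁, by linear_combination e₂, by linear_combination e₃,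
      by linear_combination f₁, by linear_combination f₂, by linear_combination f₃⟩
  · rintro ⟨hK, hΛ, e₁, e₂, e₃, f₁, f₂, f₃⟩
    exact ⟨⟨hK, by linear_combination e₁, by linear_combination e₂, by linear_combination e₃⟩,
      hΛ, by linear_combination f₁, by linear_combination f₂, by linear_combination f₃⟩
end

section
/- Assume the grid-parity condition ρc/b − θ ≤ ρh + π and the condition ρh + π < P_D. For each λ > 0, let K11(λ) > 0 be the (1,1) entry of the unique symmetric positive-definite matrix solving the social planner's Riccati system with penalty parameter λ, and define the asymptotic Pareto price P*(λ) := (1 − K_c/K11(λ))·(ρc/b − θ) + (K_c/K11(λ))·(ρh + π) and the asymptotic Stackelberg price (with zero initial capacity) P^⋄₀(λ) := (1 − 1/ξ(λ))·P_D + (1/ξ(λ))·P_F⁰(λ), where K_f(λ) := (δ/2)·(−ρ + √(ρ² + 4λ/δ)), ξ(λ) := 2 + (λ/(σ²K_c))·(1 − λδ/(ρδ + K_f(λ))²), and P_F⁰(λ) := (ρh + π)·λδ/(ρδ + K_f(λ))². Then there exists λ₀ > 0 such that P^⋄₀(λ) > P*(λ) for all λ ≥ λ₀: for a sufficiently large commitment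 penalty, the Stackelberg long-term stationary price is larger than the Pareto price. -/
/-!
As `λ → ∞` both prices converge, and to different limits. On the planner's side, positive
definiteness bounds `K12² < K11 K22` and the third Riccati equation bounds `K22 ≤ √(δλ)`, so the
first equation forces `λ = O(K11²)`; hence `K11 → ∞` and `P*(λ) → ρc/b − θ`. On the leader's side,
`K_f` is the nonnegative root of `K² / δ + ρ K = λ`, which turns `ξ(λ)` into `2 + ρ K_f / (σ² K_c)`
and `P_F⁰(λ)` into `(ρh + π) K_f / (ρδ + K_f)`; since `K_f → ∞`, `P^⋄₀(λ) → P_D`. Grid parity and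
admissibility give `ρc/b − θ < P_D`.
-/

open Filter Topology

lemma neg_add_sqrt_sq_add_pos (a : ℝ) {e : ℝ} (he : 0 < e) : 0 < -a + √(a ^ 2 + e) := by
  linarith [Real.lt_sqrt_of_sq_lt (show a ^ 2 < a ^ 2 + e by linarith)]

lemma tendsto_div_const_add_atTop (a : ℝ) : Tendsto (fun x : ℝ => x / (a + x)) atTop (𝓝 1) := by
  have h : Tendsto (fun x : ℝ => 1 - a / (a + x)) atTop (𝓝 (1 - 0)) :=
    tendsto_const_nhds.sub
      (tendsto_const_nhds.div_atTop (tendsto_atTop_add_const_left _ a tendsto_id))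
  rw [sub_zero] at h
  refine h.congr' ?_
  filter_upwards [eventually_gt_atTop (-a)] with x hx
  field_simp [show a + x ≠ 0 by linarith]
  ring

lemma tendsto_convex_comb_of_tendsto_zero {α : Type*} {l : Filter α} {w g : α → ℝ} {x y : ℝ}
    (hw : Tendsto w l (𝓝 0)) (hg : Tendsto g l (𝓝 y)) :
    Tendsto (fun t => (1 - w t) * x + w t * g t) l (𝓝 x) := by
  simpa using (((tendsto_const_nhds (x := (1 : ℝ))).sub hw).mul
    (tendsto_const_nhds (x := x))).add (hw.mul hg)

lemma tendsto_atTop_of_lt_quadratic {f : ℝ → ℝ} {α β : ℝ} (hα : 0 ≤ α) (hβ : 0 ≤ β)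
    (hf : ∀ᶠ x in atTop, 0 < f x ∧ x < α * f x ^ 2 + β * f x) :
    Tendsto f atTop atTop := by
  refine tendsto_atTop.2 fun M => ?_
  filter_upwards [hf, eventually_ge_atTop (α * M ^ 2 + β * M)] with x ⟨hpos, hlt⟩ hge
  by_contra! hM
  nlinarith [mul_le_mul_of_nonneg_left (pow_le_pow_left₀ hpos.le hM.le 2) hα]

lemma lam_lt_of_planner_riccati {b γ δ ρ σ η lam K11 K12 K22 : ℝ}
    (hγ : 0 ≤ γ) (hδ : 0 < δ) (hρ : 0 ≤ ρ) (hη : 0 ≤ η)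
    (h1 : (b ^ 2 / γ) * K11 ^ 2 + (1 / δ) * K12 ^ 2 + (ρ - σ ^ 2) * K11 - lam - η = 0)
    (h3 : (b ^ 2 / γ) * K12 ^ 2 + (1 / δ) * K22 ^ 2 + ρ * K22 - lam = 0)
    (hK11 : 0 < K11) (hdet : 0 < K11 * K22 - K12 ^ 2) :
    lam < (2 * (b ^ 2 / γ) + 1 / δ) * K11 ^ 2 + 2 * (ρ - σ ^ 2) * K11 := by
  have hK22 : 0 < K22 := pos_of_mul_pos_right (by nlinarith [sq_nonneg K12]) hK11.le
  have hK22_sq : K22 ^ 2 ≤ δ * lam := by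
    have h : (1 / δ) * K22 ^ 2 ≤ lam := by
      nlinarith [mul_nonneg (div_nonneg (sq_nonneg b) hγ) (sq_nonneg K12), mul_nonneg hρ hK22.le]
    rwa [one_div, inv_mul_le_iff₀ hδ] at h
  have hK12_sq : K12 ^ 2 < (K11 ^ 2 + δ * lam) / 2 := by nlinarith [sq_nonneg (K11 - K22)]
  have hK12_term : (1 / δ) * K12 ^ 2 < (1 / δ) * K11 ^ 2 / 2 + lam / 2 :=
    calc (1 / δ) * K12 ^ 2 < (1 / δ) * ((K11 ^ 2 + δ * lam) / 2) :=
          mul_lt_mul_of_pos_left hK12_sq (by positivity)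
      _ = (1 / δ) * K11 ^ 2 / 2 + lam / 2 := by field_simp
  linarith

lemma tendsto_atTop_of_planner_riccati {b γ δ ρ σ η : ℝ} {K11 : ℝ → ℝ} (hγ : 0 ≤ γ) (hδ : 0 < δ)
    (hρ : 0 ≤ ρ) (hη : 0 ≤ η) (hρσ : σ ^ 2 ≤ ρ)
    (hK11 : ∀ lam : ℝ, 0 < lam → ∃ K12 K22 : ℝ,
      (b ^ 2 / γ) * K11 lam ^ 2 + (1 / δ) * K12 ^ 2 + (ρ - σ ^ 2) * K11 lam - lam - η = 0 ∧
      (b ^ 2 / γ) * K12 ^ 2 + (1 / δ) * K22 ^ 2 + ρ * K22 - lam = 0 ∧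
      0 < K11 lam ∧ 0 < K11 lam * K22 - K12 ^ 2) :
    Tendsto K11 atTop atTop := by
  refine tendsto_atTop_of_lt_quadratic (α := 2 * (b ^ 2 / γ) + 1 / δ) (β := 2 * (ρ - σ ^ 2))
    (by positivity) (by linarith) ?_
  filter_upwards [eventually_gt_atTop 0] with lam hlam
  obtain ⟨K12, K22, h1, h3, hpos, hdet⟩ := hK11 lam hlam
  exact ⟨hpos, lam_lt_of_planner_riccati hγ hδ hρ hη h1 h3 hpos hdet⟩

/-- The follower's gain `K_f(λ)`. -/
noncomputable def followerGain (ρ δ lam : ℝ) : ℝ := δ / 2 * (-ρ + √(ρ ^ 2 + 4 * lam / δ))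

section FollowerGain

variable {ρ δ lam : ℝ}

lemma followerGain_nonneg (hδ : 0 < δ) (hlam : 0 ≤ lam) : 0 ≤ followerGain ρ δ lam := by
  have h4 : 0 ≤ 4 * lam / δ := by positivity
  have : ρ ≤ √(ρ ^ 2 + 4 * lam / δ) := (le_abs_self ρ).trans (Real.abs_le_sqrt (by linarith))
  unfold followerGain
  nlinarith

lemma followerGain_mul_add (hδ : 0 < δ) (hlam : 0 ≤ lam) :
    followerGain ρ δ lam * (followerGain ρ δ lam + ρ * δ) = lam * δ := by
  have hs := Real.sq_sqrt (show 0 ≤ ρ ^ 2 + 4 * lam / δ by positivity)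
  have hδlam : δ ^ 2 / 4 * (4 * lam / δ) = lam * δ := by field_simp
  unfold followerGain
  linear_combination δ ^ 2 / 4 * hs + hδlam

lemma tendsto_followerGain_atTop (hδ : 0 < δ) : Tendsto (followerGain ρ δ) atTop atTop := by
  have hlin : Tendsto (fun lam : ℝ => ρ ^ 2 + 4 / δ * lam) atTop atTop :=
    tendsto_atTop_add_const_left _ _ (tendsto_id.const_mul_atTop (by positivity))
  have hs := tendsto_atTop_add_const_left _ (-ρ) (Real.tendsto_sqrt_atTop.comp hlin)
  refine (hs.const_mul_atTop (half_pos hδ)).congr fun lam => ?_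
  simp [followerGain, mul_div_assoc', mul_comm]

lemma mul_add_followerGain_pos (hδ : 0 < δ) (hρ : 0 < ρ) (hlam : 0 ≤ lam) :
    0 < ρ * δ + followerGain ρ δ lam :=
  add_pos_of_pos_of_nonneg (mul_pos hρ hδ) (followerGain_nonneg hδ hlam)

lemma followerGain_ratio (hδ : 0 < δ) (hρ : 0 < ρ) (hlam : 0 ≤ lam) :
    lam * δ / (ρ * δ + followerGain ρ δ lam) ^ 2
      = followerGain ρ δ lam / (ρ * δ + followerGain ρ δ lam) := by
  have hpos := mul_add_followerGain_pos hδ hρ hlam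
  rw [div_eq_div_iff (by positivity) hpos.ne']
  linear_combination -(ρ * δ + followerGain ρ δ lam) * followerGain_mul_add (ρ := ρ) hδ hlam

lemma mul_one_sub_followerGain_ratio (hδ : 0 < δ) (hρ : 0 < ρ) (hlam : 0 ≤ lam) :
    lam * (1 - lam * δ / (ρ * δ + followerGain ρ δ lam) ^ 2) = ρ * followerGain ρ δ lam := by
  have hpos := mul_add_followerGain_pos hδ hρ hlam
  rw [followerGain_ratio hδ hρ hlam]
  field_simp
  linear_combination -ρ * followerGain_mul_add (ρ := ρ) hδ hlam

lemma tendsto_followerGain_ratio (hδ : 0 < δ) (hρ : 0 < ρ) :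
    Tendsto (fun lam => lam * δ / (ρ * δ + followerGain ρ δ lam) ^ 2) atTop (𝓝 1) := by
  refine ((tendsto_div_const_add_atTop (ρ * δ)).comp
    (tendsto_followerGain_atTop (ρ := ρ) hδ)).congr' ?_
  filter_upwards [eventually_ge_atTop 0] with lam hlam
  exact (followerGain_ratio hδ hρ hlam).symm

lemma tendsto_mul_one_sub_followerGain_ratio (hδ : 0 < δ) (hρ : 0 < ρ) :
    Tendsto (fun lam => lam * (1 - lam * δ / (ρ * δ + followerGain ρ δ lam) ^ 2)) atTop atTop := by
  refine ((tendsto_followerGain_atTop (ρ := ρ) hδ).const_mul_atTop hρ).congr' ?_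
  filter_upwards [eventually_ge_atTop 0] with lam hlam
  exact (mul_one_sub_followerGain_ratio hδ hρ hlam).symm

end FollowerGain

theorem stmt_19_general (ρ σ b γ δ η : ℝ) (hρ : 0 < ρ) (hσ : 0 < σ) (hb : 0 < b)
    (hγ : 0 < γ) (hδ : 0 < δ) (hη : 0 < η) (hρσ : σ ^ 2 < ρ)
    (θ c h π : ℝ)
    (Kc PD : ℝ)
    (hKc : Kc = (γ / (2 * b ^ 2)) *
      (-(ρ - σ ^ 2) + Real.sqrt ((ρ - σ ^ 2) ^ 2 + 4 * b ^ 2 * η / γ)))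
    -- grid parity and admissibility conditions
    (hgrid : ρ * c / b - θ ≤ ρ * h + π)
    (hadm : ρ * h + π < PD)
    -- for each λ > 0, K11(λ) is the (1,1) entry of the symmetric
    -- positive-definite solution of the Riccati system with penalty λ
    (K11 : ℝ → ℝ)
    (hK11 : ∀ lam : ℝ, 0 < lam → ∃ K12 K22 : ℝ,
      ((b ^ 2 / γ) * (K11 lam) ^ 2 + (1 / δ) * K12 ^ 2
          + (ρ - σ ^ 2) * K11 lam - lam - η = 0 ∧
        (b ^ 2 / γ) * K11 lam * K12 + (1 / δ) * K12 * K22 + ρ * K12 - lam = 0 ∧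
        (b ^ 2 / γ) * K12 ^ 2 + (1 / δ) * K22 ^ 2 + ρ * K22 - lam = 0) ∧
      0 < K11 lam ∧ 0 < K11 lam * K22 - K12 ^ 2)
    -- the asymptotic Pareto and Stackelberg prices
    (Pstar Pdia : ℝ → ℝ)
    (hPstar : ∀ lam : ℝ, Pstar lam =
      (1 - Kc / K11 lam) * (ρ * c / b - θ) + (Kc / K11 lam) * (ρ * h + π))
    (Kf ξ PF0 : ℝ → ℝ)
    (hKf : ∀ lam : ℝ, Kf lam = (δ / 2) * (-ρ + Real.sqrt (ρ ^ 2 + 4 * lam / δ)))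
    (hξ : ∀ lam : ℝ, ξ lam =
      2 + (lam / (σ ^ 2 * Kc)) * (1 - lam * δ / (ρ * δ + Kf lam) ^ 2))
    (hPF0 : ∀ lam : ℝ, PF0 lam = (ρ * h + π) * (lam * δ / (ρ * δ + Kf lam) ^ 2))
    (hPdia : ∀ lam : ℝ, Pdia lam =
      (1 - 1 / ξ lam) * PD + (1 / ξ lam) * PF0 lam) :
    ∃ lam₀ : ℝ, 0 < lam₀ ∧ ∀ lam : ℝ, lam₀ ≤ lam → Pstar lam < Pdia lam := by
  obtain rfl : Kf = followerGain ρ δ := funext hKf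
  have hKc_pos : 0 < Kc :=
    hKc ▸ mul_pos (by positivity) (neg_add_sqrt_sq_add_pos _ (by positivity))
  have hK11_top := tendsto_atTop_of_planner_riccati hγ.le hδ hρ.le hη.le hρσ.le
    fun lam hlam => by
      obtain ⟨K12, K22, ⟨h1, -, h3⟩, hK⟩ := hK11 lam hlam
      exact ⟨K12, K22, h1, h3, hK⟩
  have hPstar_lim : Tendsto Pstar atTop (𝓝 (ρ * c / b - θ)) := by
    rw [funext hPstar]
    exact tendsto_convex_comb_of_tendsto_zero (tendsto_const_nhds.div_atTop hK11_top)
      tendsto_const_nhds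
  have hξ_top : Tendsto ξ atTop atTop := by
    simp_rw [funext hξ, div_mul_eq_mul_div]
    exact tendsto_atTop_add_const_left _ 2
      ((tendsto_mul_one_sub_followerGain_ratio hδ hρ).atTop_div_const (by positivity))
  have hPF0_lim : Tendsto PF0 atTop (𝓝 (ρ * h + π)) := by
    simpa [funext hPF0] using (tendsto_followerGain_ratio hδ hρ).const_mul (ρ * h + π)
  have hPdia_lim : Tendsto Pdia atTop (𝓝 PD) := by
    rw [funext hPdia]
    exact tendsto_convex_comb_of_tendsto_zero (tendsto_const_nhds.div_atTop hξ_top) hPF0_lim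
  obtain ⟨lam₀, hlam₀, hlt⟩ := (atTop_basis' 1).eventually_iff.1
    (hPstar_lim.eventually_lt hPdia_lim (hgrid.trans_lt hadm))
  exact ⟨lam₀, one_pos.trans_le hlam₀, hlt⟩

/-- Proposition 4.3: under grid parity `ρc/b − θ ≤ ρh + π` and
`ρh + π < P_D`, if for each penalty `λ > 0`, `K11(λ)` is the (1,1) entry of
the symmetric positive-definite solution of the social planner's Riccati
system, then for all sufficiently large `λ` the asymptotic Stackelberg price
`P⋄₀(λ)` (zero initial capacity) exceeds the asymptotic Pareto price `P*(λ)`. -/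
theorem stmt_19 (ρ σ b γ δ η D : ℝ) (hρ : 0 < ρ) (hσ : 0 < σ) (hb : 0 < b)
    (hγ : 0 < γ) (hδ : 0 < δ) (hη : 0 < η) (hD : 0 < D) (hρσ : σ ^ 2 < ρ)
    (θ c h π : ℝ)
    (Kc PD : ℝ)
    (hKc : Kc = (γ / (2 * b ^ 2)) *
      (-(ρ - σ ^ 2) + Real.sqrt ((ρ - σ ^ 2) ^ 2 + 4 * b ^ 2 * η / γ)))
    (hPD : PD = (ρ * c / b - θ) + 2 * σ ^ 2 * Kc * D)
    -- grid parity and admissibility conditions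
    (hgrid : ρ * c / b - θ ≤ ρ * h + π)
    (hadm : ρ * h + π < PD)
    -- for each λ > 0, K11(λ) is the (1,1) entry of the symmetric
    -- positive-definite solution of the Riccati system with penalty λ
    (K11 : ℝ → ℝ)
    (hK11 : ∀ lam : ℝ, 0 < lam → ∃ K12 K22 : ℝ,
      ((b ^ 2 / γ) * (K11 lam) ^ 2 + (1 / δ) * K12 ^ 2
          + (ρ - σ ^ 2) * K11 lam - lam - η = 0 ∧
        (b ^ 2 / γ) * K11 lam * K12 + (1 / δ) * K12 * K22 + ρ * K12 - lam = 0 ∧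
        (b ^ 2 / γ) * K12 ^ 2 + (1 / δ) * K22 ^ 2 + ρ * K22 - lam = 0) ∧
      0 < K11 lam ∧ 0 < K11 lam * K22 - K12 ^ 2)
    -- the asymptotic Pareto and Stackelberg prices
    (Pstar Pdia : ℝ → ℝ)
    (hPstar : ∀ lam : ℝ, Pstar lam =
      (1 - Kc / K11 lam) * (ρ * c / b - θ) + (Kc / K11 lam) * (ρ * h + π))
    (Kf ξ PF0 : ℝ → ℝ)
    (hKf : ∀ lam : ℝ, Kf lam = (δ / 2) * (-ρ + Real.sqrt (ρ ^ 2 + 4 * lam / δ)))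
    (hξ : ∀ lam : ℝ, ξ lam =
      2 + (lam / (σ ^ 2 * Kc)) * (1 - lam * δ / (ρ * δ + Kf lam) ^ 2))
    (hPF0 : ∀ lam : ℝ, PF0 lam = (ρ * h + π) * (lam * δ / (ρ * δ + Kf lam) ^ 2))
    (hPdia : ∀ lam : ℝ, Pdia lam =
      (1 - 1 / ξ lam) * PD + (1 / ξ lam) * PF0 lam) :
    ∃ lam₀ : ℝ, 0 < lam₀ ∧ ∀ lam : ℝ, lam₀ ≤ lam → Pstar lam < Pdia lam :=
  stmt_19_general ρ σ b γ δ η hρ hσ hb hγ hδ hη hρσ θ c h π Kc PD hKc hgrid hadm K11 hK11 Pstar Pdia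
    hPstar Kf ξ PF0 hKf hξ hPF0 hPdia
end
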